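/- arXiv:1206.4415 — 5 statements merged into one kernel-verified Lean document; each statement's English description precedes it below -/
import Mathlib

section
/- Let n ≥ 2 and let c = (c_1, …, c_n) be an admissible sequence, i.e. positive integers with c_j ≤ c_{j+1} + 1 for 1 ≤ j ≤ n−1, c_n ≤ c_1 + 1, and c_j ≥ 2 for all j. Define c′_j = c_j − ⌊(c_j + j − 1)/n⌋ for 1 ≤ j ≤ n−1. Then c′ satisfies: c′_j ≥ 1 for all j, c′_j ≤ c′_{j+1} + 1 for 1 ≤ j ≤ n−2, and c′_{n−1} ≤ c′_1 + 1. -/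
/-!
Write `d_j = ⌊(c_j + j - 1) / n⌋`. Positivity holds because `c_j + j - 1 < c_j n` for `j < n`.
Both inequalities then reduce to `⌊y / n⌋ - ⌊x / n⌋ ≤ y - x` for `x ≤ y`: between consecutive
indices the numerator grows by `c_{j+1} - c_j + 1`, and the wrap-around case compares
`c_{n-1} + n - 2` with `c_1 + n`, using `⌊(c_1 + n) / n⌋ = ⌊c_1 / n⌋ + 1`.
-/

theorem Nat.add_div_le_div_add (x k n : ℕ) : (x + k) / n ≤ x / n + k := by
  rcases n.eq_zero_or_pos with rfl | hn
  · simp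
  calc (x + k) / n ≤ (x + k * n) / n := Nat.div_le_div_right (by nlinarith)
    _ = x / n + k := Nat.add_mul_div_right x k hn

theorem Nat.add_sub_one_div_lt {c j n : ℕ} (hc : 1 ≤ c) (hj : j < n) :
    (c + j - 1) / n < c := by
  rw [Nat.div_lt_iff_lt_mul (by omega)]
  obtain ⟨m, rfl⟩ : ∃ m, n = m + 1 := ⟨n - 1, by omega⟩
  have : m ≤ c * m := Nat.le_mul_of_pos_left m hc
  rw [Nat.mul_succ]
  omega

theorem Nat.sub_div_le_sub_div_add_one {a b x y n : ℕ} (hxy : x ≤ y)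
    (hgrowth : y + a ≤ x + b + 1) (hy : y / n ≤ b) :
    a - x / n ≤ b - y / n + 1 := by
  have := Nat.add_div_le_div_add x (y - x) n
  rw [Nat.add_sub_cancel' hxy] at this
  omega

/-- the derived sequence of an admissible sequence is admissible. -/
theorem admissible_derived_sequence
    (n : ℕ) (hn : 2 ≤ n) (c : ℕ → ℕ)
    (hadm1 : ∀ j, 1 ≤ j → j ≤ n → 2 ≤ c j)
    (hadm2 : ∀ j, 1 ≤ j → j ≤ n - 1 → c j ≤ c (j + 1) + 1)
    (hadm3 : c n ≤ c 1 + 1)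
    (c' : ℕ → ℕ)
    (hc' : ∀ j, 1 ≤ j → j ≤ n - 1 → c' j = c j - (c j + j - 1) / n) :
    (∀ j, 1 ≤ j → j ≤ n - 1 → 1 ≤ c' j) ∧
    (∀ j, 1 ≤ j → j ≤ n - 2 → c' j ≤ c' (j + 1) + 1) ∧
    c' (n - 1) ≤ c' 1 + 1 := by
  have hdiv_lt : ∀ j, 1 ≤ j → j ≤ n - 1 → (c j + j - 1) / n < c j := fun j h1 h2 =>
    Nat.add_sub_one_div_lt (by linarith [hadm1 j h1 (by omega)]) (by omega)
  refine ⟨fun j h1 h2 => ?_, fun j h1 h2 => ?_, ?_⟩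
  · rw [hc' j h1 h2]
    have := hdiv_lt j h1 h2
    omega
  · have hstep := hadm2 j h1 (by omega)
    have hnext := hdiv_lt (j + 1) (by omega) (by omega)
    rw [hc' j h1 (by omega), hc' (j + 1) (by omega) (by omega)]
    exact Nat.sub_div_le_sub_div_add_one (by omega) (by omega) hnext.le
  · have hstep := hadm2 (n - 1) (by omega) le_rfl
    rw [Nat.sub_add_cancel (by omega)] at hstep
    -- rewriting `c'_1` with numerator `c_1 + n` makes the wrap-around look like a consecutive step
    have hwrap : (c 1 + n) / n = c 1 / n + 1 := Nat.add_div_right _ (by omega)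
    have hfirst : c' 1 = (c 1 + 1) - (c 1 + n) / n := by
      rw [hc' 1 le_rfl (by omega), hwrap, Nat.add_sub_cancel]
      omega
    rw [hfirst, hc' (n - 1) (by omega) le_rfl]
    refine Nat.sub_div_le_sub_div_add_one (by omega) (by omega) ?_
    rw [hwrap]
    exact Nat.add_le_add_right (Nat.div_le_self _ _) 1
end

section
/- For integers n ≥ 2 and m ≥ 1, let φ_n(m) denote the unique integer r with 1 ≤ r ≤ n and m ≡ r (mod n). If φ_n(m) < n, then φ_{n−1}(m − ⌊(m−1)/n⌋) = φ_n(m); and if φ_n(m) = n, then φ_{n−1}(m − ⌊(m−1)/n⌋) = 1. -/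
/-!
Write `m = s + n q` with `q = ⌊(m - 1) / n⌋` and `s = φ_n(m) ∈ [1, n]`. Then
`m - q = s + (n - 1) q`, so `φ_{n-1}(m - q) = φ_{n-1}(s)`, which is `s` when `s < n`
and `φ_{n-1}(n) = 1` when `s = n`.
-/

/-- `phi n m` is the unique `r` with `1 ≤ r ≤ n` and `m ≡ r [MOD n]`. -/
def phi (n m : ℕ) : ℕ := if m % n = 0 then n else m % n

theorem phi_add_mul (n a q : ℕ) : phi n (a + n * q) = phi n a := by
  simp only [phi, Nat.add_mul_mod_self_left]

theorem phi_of_pos_of_le {n a : ℕ} (ha : 0 < a) (han : a ≤ n) : phi n a = a := by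
  unfold phi
  rcases han.lt_or_eq with h | rfl
  · rw [Nat.mod_eq_of_lt h, if_neg ha.ne']
  · simp

theorem phi_eq_pred_mod_add_one {n m : ℕ} (hm : 0 < m) : phi n m = (m - 1) % n + 1 := by
  rcases Nat.eq_zero_or_pos n with rfl | hn
  · simp only [phi, Nat.mod_zero, hm.ne', if_false]
    omega
  have hsplit : m = ((m - 1) % n + 1) + n * ((m - 1) / n) := by
    have := Nat.mod_add_div (m - 1) n
    omega
  conv_lhs => rw [hsplit]
  rw [phi_add_mul, phi_of_pos_of_le (Nat.succ_pos _) (Nat.mod_lt _ hn)]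

theorem phi_succ_self (n : ℕ) : phi n (n + 1) = 1 := by
  simp [phi_eq_pred_mod_add_one n.succ_pos]

theorem pos_phi {n m : ℕ} (hm : 0 < m) : 0 < phi n m := by
  rw [phi_eq_pred_mod_add_one hm]
  exact Nat.succ_pos _

theorem phi_add_mul_pred_div {n m : ℕ} (hm : 0 < m) : phi n m + n * ((m - 1) / n) = m := by
  have := Nat.mod_add_div (m - 1) n
  rw [phi_eq_pred_mod_add_one hm]
  omega

theorem phi_pred_sub_pred_div {n m : ℕ} (hn : 0 < n) (hm : 0 < m) :
    phi (n - 1) (m - (m - 1) / n) = phi (n - 1) (phi n m) := by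
  have hsplit := phi_add_mul_pred_div (n := n) hm
  obtain ⟨k, rfl⟩ : ∃ k, n = k + 1 := ⟨n - 1, by omega⟩
  generalize (m - 1) / (k + 1) = q at hsplit ⊢
  have hsub : m - q = phi (k + 1) m + k * q := by
    rw [add_mul, one_mul] at hsplit
    omega
  rw [Nat.add_sub_cancel, hsub, phi_add_mul]

theorem phi_pred_of_floor_general (n m : ℕ) (hm : 1 ≤ m) :
    (phi n m < n → phi (n - 1) (m - (m - 1) / n) = phi n m) ∧
    (phi n m = n → phi (n - 1) (m - (m - 1) / n) = 1) := by
  have hpos : 0 < phi n m := pos_phi hm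
  refine ⟨fun hlt => ?_, fun heq => ?_⟩
  · rw [phi_pred_sub_pred_div (by omega) hm]
    exact phi_of_pos_of_le hpos (by omega)
  · rw [phi_pred_sub_pred_div (by omega) hm, heq]
    obtain ⟨k, rfl⟩ : ∃ k, n = k + 1 := ⟨n - 1, by omega⟩
    simpa using phi_succ_self k

theorem phi_pred_of_floor (n m : ℕ) (hn : 2 ≤ n) (hm : 1 ≤ m) :
    (phi n m < n → phi (n - 1) (m - (m - 1) / n) = phi n m) ∧
    (phi n m = n → phi (n - 1) (m - (m - 1) / n) = 1) :=
  phi_pred_of_floor_general n m hm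
end

section
/- Let θ : S → S and θ′ : S′ → S′ be maps of finite sets and π : S → S′ a surjection with π ∘ θ = θ′ ∘ π. Assume that π is injective except for exactly one fiber of cardinality two, i.e. there exist distinct a, b ∈ S with π(a) = π(b), and π is injective on S \ {b}. Then the stabilization indices satisfy d(θ) ≤ d(θ′) + 1. -/
/-!
Only one fiber of `π` is not a singleton, and `π` maps `Im θ^k` onto `Im θ'^k`. Hence, at a
level `k` where `Im θ'^k = Im θ'^{k+1}`, the only points that can be lost in passing from
`Im θ^k` to `Im θ^{k+1}` are `a` and `b`, and one of them is lost only if the other survives.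
With `m = d(θ')`, a loss at level `m + 1` puts both `a` and `b` in `Im θ^{m+1}`, so nothing is
lost at level `m`; but then `Im θ^m = Im θ^{m+1}` and nothing is lost at level `m + 1` either.
-/

/-- The stabilization index of a self-map of a finite set: the least `m` with
`Im θ^m = Im θ^{m+1}`. -/
noncomputable def stabIdx {S : Type*} (θ : S → S) : ℕ :=
  sInf {m | Set.range θ^[m] = Set.range θ^[m + 1]}

open Function Set

section Iterate

variable {S : Type*} (θ : S → S)

lemma range_iterate_succ (n : ℕ) : range θ^[n + 1] = θ '' range θ^[n] := by
  rw [iterate_succ', range_comp]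

lemma antitone_range_iterate : Antitone fun n => range θ^[n] :=
  antitone_nat_of_succ_le fun n => by
    rw [iterate_succ]
    exact range_comp_subset_range _ _

lemma range_iterate_succ_eq_succ_succ {n : ℕ} (h : range θ^[n] = range θ^[n + 1]) :
    range θ^[n + 1] = range θ^[n + 2] :=
  (range_iterate_succ θ n).trans <|
    (congrArg (θ '' ·) h).trans (range_iterate_succ θ (n + 1)).symm

lemma range_iterate_stabIdx [Finite S] :
    range θ^[stabIdx θ] = range θ^[stabIdx θ + 1] := by
  obtain ⟨n, hn⟩ := WellFoundedLT.antitone_chain_condition (antitone_range_iterate θ)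
  have hne : {m | range θ^[m] = range θ^[m + 1]}.Nonempty := ⟨n, hn (n + 1) n.le_succ⟩
  exact Nat.sInf_mem hne

lemma stabIdx_le {n : ℕ} (h : range θ^[n] = range θ^[n + 1]) : stabIdx θ ≤ n :=
  Nat.sInf_le h

end Iterate

lemma Function.Semiconj.image_range_iterate {S S' : Type*} {π : S → S'} {θ : S → S}
    {θ' : S' → S'} (h : Semiconj π θ θ') (hπ : Surjective π) (n : ℕ) :
    π '' range θ^[n] = range θ'^[n] := by
  rw [← range_comp, (h.iterate_right n).comp_eq, range_comp, hπ.range_eq, image_univ]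

section AlmostInjective

variable {S S' : Type*} {π : S → S'} {a b : S}

lemma pair_eq_of_injOn_compl_singleton (hab : a ≠ b) (hfib : π a = π b)
    (hinj : InjOn π {b}ᶜ) {x y : S} (hxy : x ≠ y) (h : π x = π y) :
    ({x, y} : Set S) = {a, b} := by
  by_cases hxb : x = b
  · subst hxb
    have hya : y = a := hinj (Ne.symm hxy) hab (h.symm.trans hfib.symm)
    rw [hya, pair_comm]
  · have hyb : y = b := by
      by_contra hyb
      exact hxy (hinj hxb hyb h)
    subst hyb
    rw [hinj hxb hab (h.trans hfib.symm)]

variable (hab : a ≠ b) (hfib : π a = π b) (hinj : InjOn π {b}ᶜ) {T U : Set S}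
include hab hfib hinj

lemma exists_mem_pair_eq_of_mem_diff (hU : π '' U ⊆ π '' T) {x : S} (hx : x ∈ U \ T) :
    ∃ y ∈ T, ({x, y} : Set S) = {a, b} := by
  obtain ⟨y, hyT, hy⟩ := hU (mem_image_of_mem π hx.1)
  have hxy : x ≠ y := by
    rintro rfl
    exact hx.2 hyT
  exact ⟨y, hyT, pair_eq_of_injOn_compl_singleton hab hfib hinj hxy hy.symm⟩

lemma diff_subset_pair_of_image_subset (hU : π '' U ⊆ π '' T) : U \ T ⊆ {a, b} := by
  intro x hx
  obtain ⟨y, -, hpair⟩ := exists_mem_pair_eq_of_mem_diff hab hfib hinj hU hx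
  exact hpair ▸ mem_insert x {y}

lemma pair_subset_of_mem_diff (hTU : T ⊆ U) (hU : π '' U ⊆ π '' T) {x : S}
    (hx : x ∈ U \ T) : {a, b} ⊆ U := by
  obtain ⟨y, hyT, hpair⟩ := exists_mem_pair_eq_of_mem_diff hab hfib hinj hU hx
  rw [← hpair]
  exact pair_subset hx.1 (hTU hyT)

end AlmostInjective

theorem stabIdx_le_succ_of_almost_injective_general {S S' : Type*} [Fintype S']
    (θ : S → S) (θ' : S' → S') (π : S → S')
    (hπ : Function.Surjective π) (hcomm : π ∘ θ = θ' ∘ π)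
    (a b : S) (hab : a ≠ b) (hfib : π a = π b)
    (hinj : Set.InjOn π {b}ᶜ) :
    stabIdx θ ≤ stabIdx θ' + 1 := by
  have hR := (semiconj_iff_comp_eq.2 hcomm).image_range_iterate hπ
  set m := stabIdx θ'
  have hstab₀ : π '' range θ^[m] = π '' range θ^[m + 1] := by
    rw [hR, hR, range_iterate_stabIdx]
  have hstab₁ : π '' range θ^[m + 1] = π '' range θ^[m + 2] := by
    rw [hR, hR, range_iterate_succ_eq_succ_succ θ' (range_iterate_stabIdx θ')]
  apply stabIdx_le
  by_contra hne
  have hsub : range θ^[m + 2] ⊆ range θ^[m + 1] := antitone_range_iterate θ (m + 1).le_succ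
  obtain ⟨x, hx⟩ := exists_of_ssubset (hsub.ssubset_of_ne (Ne.symm hne))
  have hpair := pair_subset_of_mem_diff hab hfib hinj hsub hstab₁.le hx
  have hdiff := diff_subset_pair_of_image_subset hab hfib hinj hstab₀.le
  have hlevel : range θ^[m] = range θ^[m + 1] :=
    ((sdiff_subset_iff.1 hdiff).trans (union_subset subset_rfl hpair)).antisymm
      (antitone_range_iterate θ m.le_succ)
  exact hne (range_iterate_succ_eq_succ_succ θ hlevel)

/-- if `π` is a surjection which is injective except for exactly one
fiber of cardinality two, then `d(θ) ≤ d(θ′) + 1`. -/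
theorem stabIdx_le_succ_of_almost_injective {S S' : Type*} [Fintype S] [Fintype S']
    (θ : S → S) (θ' : S' → S') (π : S → S')
    (hπ : Function.Surjective π) (hcomm : π ∘ θ = θ' ∘ π)
    (a b : S) (hab : a ≠ b) (hfib : π a = π b)
    (hinj : Set.InjOn π {b}ᶜ) :
    stabIdx θ ≤ stabIdx θ' + 1 :=
  stabIdx_le_succ_of_almost_injective_general θ θ' π hπ hcomm a b hab hfib hinj
end

section
/- Every admissible sequence c = (c_1,…,c_n) with all c_j ≥ 2 admits a cyclic permutation (d_1,…,d_n) which is normalized, meaning either d_1 = d_2 = … = d_n, or d_1 is minimal among all d_j and d_n = d_1 + 1. -/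
namespace Fin

open Fin.NatCast in
theorem forall_of_sub_one_closed {n : ℕ} {P : Fin (n + 1) → Prop}
    (hP : ∀ j, P j → P (j - 1)) {i : Fin (n + 1)} (hi : P i) (j : Fin (n + 1)) : P j := by
  have hsub : ∀ t : ℕ, P (i - t) := by
    intro t
    induction t with
    | zero => simpa using hi
    | succ t ih => simpa [sub_sub] using hP _ ih
  simpa using hsub (i - j).val

theorem last_add_eq_sub_one {n : ℕ} (k : Fin (n + 1)) : last n + k = k - 1 := by
  rw [eq_sub_iff_add_eq, add_right_comm, last_add_one, zero_add]

end Fin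

theorem exists_normalized_cyclic_permutation_general (n : ℕ) (c : Fin (n + 1) → ℕ)
    (hadm : ∀ j, c j ≤ c (j + 1) + 1) :
    ∃ k : Fin (n + 1),
      (∀ i j : Fin (n + 1), c (i + k) = c (j + k)) ∨
      ((∀ j : Fin (n + 1), c ((0 : Fin (n + 1)) + k) ≤ c (j + k)) ∧
        c (Fin.last n + k) = c ((0 : Fin (n + 1)) + k) + 1) := by
  obtain ⟨i₀, hmin⟩ := Finite.exists_min c
  by_cases hconst : ∀ j, c j = c i₀
  · exact ⟨0, .inl fun i j => (hconst _).trans (hconst _).symm⟩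
  -- Otherwise the minimum is not closed under `j ↦ j - 1`: some minimal entry follows a larger one.
  obtain ⟨k, hk, hpred⟩ : ∃ k, c k = c i₀ ∧ c (k - 1) ≠ c i₀ := by
    by_contra! h
    exact hconst (Fin.forall_of_sub_one_closed h rfl)
  refine ⟨k, .inr ⟨fun j => ?_, ?_⟩⟩
  · rw [zero_add, hk]
    exact hmin _
  · have hstep := hadm (k - 1)
    rw [sub_add_cancel] at hstep
    rw [Fin.last_add_eq_sub_one, zero_add]
    have hge := hmin (k - 1)
    omega

/-- every admissible sequence with all entries `≥ 2` admits a
normalized cyclic permutation: either all entries of the rotated sequence are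
equal, or its first entry is minimal and its last entry is the first plus one.
Here `c : Fin (n+1) → ℕ` is cyclically indexed, the admissibility conditions
being `2 ≤ c j` and `c j ≤ c (j+1) + 1` for all `j` (with wrap-around), and the
rotation by `k` is `d = fun j => c (j + k)`. -/
theorem exists_normalized_cyclic_permutation (n : ℕ) (c : Fin (n + 1) → ℕ)
    (h2 : ∀ j, 2 ≤ c j)
    (hadm : ∀ j, c j ≤ c (j + 1) + 1) :
    ∃ k : Fin (n + 1),
      (∀ i j : Fin (n + 1), c (i + k) = c (j + k)) ∨
      ((∀ j : Fin (n + 1), c ((0 : Fin (n + 1)) + k) ≤ c (j + k)) ∧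
        c (Fin.last n + k) = c ((0 : Fin (n + 1)) + k) + 1) :=
  exists_normalized_cyclic_permutation_general n c hadm
end

section
/- Let n ≥ 3 and let c = (c_1,…,c_n) be a normalized admissible sequence (2 ≤ c_j ≤ c_{j+1}+1 for j < n, c_n ≤ c_1+1, and either all c_j are equal or c_1 is minimal with c_n = c_1 + 1). Define c′_j = c_j − ⌊(c_j + j − 1)/n⌋ for 1 ≤ j ≤ n−1. If c′_j ≤ 2n − 3 for all 1 ≤ j ≤ n−1, then c_j ≤ 2n − 1 for all 1 ≤ j ≤ n. -/
/-!
Since `n ⌊(c_j + j - 1)/n⌋ ≤ c_j + j - 1`, the bound `c_j - ⌊(c_j + j - 1)/n⌋ ≤ 2n - 3` gives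
`n c_j ≤ n (2n - 3) + c_j + j - 1`, i.e. `(n - 1) c_j ≤ 2n² - 3n + j - 1`. For `j ≤ n - 1` this
forces `c_j ≤ 2n - 1`, and for `j = 1` even `c_1 ≤ 2n - 2`, so that `c_n ≤ c_1 + 1 ≤ 2n - 1`.
-/

lemma Nat.mul_le_mul_add_of_sub_div_le {n c a m : ℕ} (h : c - a / n ≤ m) :
    n * c ≤ n * m + a :=
  calc n * c ≤ n * (m + a / n) := Nat.mul_le_mul_left n (by omega)
    _ = n * m + n * (a / n) := Nat.mul_add n m (a / n)
    _ ≤ n * m + a := Nat.add_le_add_left (Nat.mul_div_le a n) _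

lemma Nat.le_two_mul_sub_one_of_sub_div_le {n j c : ℕ} (hj : j < n)
    (h : c - (c + j - 1) / n ≤ 2 * n - 3) : c ≤ 2 * n - 1 := by
  have key := Nat.mul_le_mul_add_of_sub_div_le h
  by_contra! hc
  obtain rfl | hn : n = 1 ∨ 2 ≤ n := by omega
  · omega
  · zify [show 3 ≤ 2 * n by omega, show 1 ≤ c + j by omega, show 1 ≤ 2 * n by omega] at key hc
    nlinarith

lemma Nat.le_two_mul_sub_two_of_sub_div_le {n c : ℕ} (hn : 2 ≤ n) (h : c - c / n ≤ 2 * n - 3) :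
    c ≤ 2 * n - 2 := by
  have key := Nat.mul_le_mul_add_of_sub_div_le h
  by_contra! hc
  zify [show 3 ≤ 2 * n by omega, show 2 ≤ 2 * n by omega] at key hc
  nlinarith

theorem loewy_length_bound_step_general (n : ℕ) (hn : 3 ≤ n) (c c' : ℕ → ℕ)
    (hadm2 : c n ≤ c 1 + 1)
    (hc' : ∀ j, 1 ≤ j → j ≤ n - 1 → c' j = c j - (c j + j - 1) / n)
    (hbound : ∀ j, 1 ≤ j → j ≤ n - 1 → c' j ≤ 2 * n - 3) :
    ∀ j, 1 ≤ j → j ≤ n → c j ≤ 2 * n - 1 := by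
  intro j hj1 hjn
  rcases hjn.lt_or_eq with hlt | rfl
  · have h := hc' j hj1 (by omega) ▸ hbound j hj1 (by omega)
    exact Nat.le_two_mul_sub_one_of_sub_div_le hlt h
  · have h := hc' 1 le_rfl (by omega) ▸ hbound 1 le_rfl (by omega)
    rw [Nat.add_sub_cancel] at h
    have hc1 := Nat.le_two_mul_sub_two_of_sub_div_le (by omega) h
    omega

/-- induction step of Gustafson's Loewy length bound. -/
theorem loewy_length_bound_step (n : ℕ) (hn : 3 ≤ n) (c c' : ℕ → ℕ)
    (hadm1 : ∀ j, 1 ≤ j → j ≤ n - 1 → 2 ≤ c j ∧ c j ≤ c (j + 1) + 1)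
    (hadm2 : c n ≤ c 1 + 1)
    (hnorm : (∀ i j, 1 ≤ i → i ≤ n → 1 ≤ j → j ≤ n → c i = c j) ∨
      ((∀ j, 1 ≤ j → j ≤ n → c 1 ≤ c j) ∧ c n = c 1 + 1))
    (hc' : ∀ j, 1 ≤ j → j ≤ n - 1 → c' j = c j - (c j + j - 1) / n)
    (hbound : ∀ j, 1 ≤ j → j ≤ n - 1 → c' j ≤ 2 * n - 3) :
    ∀ j, 1 ≤ j → j ≤ n → c j ≤ 2 * n - 1 :=
  loewy_length_bound_step_general n hn c c' hadm2 hc' hbound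
end
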